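/- arXiv:1702.00516 — 3 statements merged into one kernel-verified Lean document; each statement's English description precedes it below -/
import Mathlib

section
/- Let K be a field and p a prime with p ≠ char(K). Let a ∈ K* be an element that is not a p-th power in K, and let K(a^{1/p}) be the field obtained by adjoining a p-th root of a. Then the kernel of the natural homomorphism K*/K*^p → K(a^{1/p})*/K(a^{1/p})*^p is the cyclic subgroup generated by the class of a; that is, if b ∈ K* becomes a p-th power in K(a^{1/p}), then b = a^i d^p for some integer i and some d ∈ K*. -/
/-!
If `K` contains a primitive `p`-th root of unity `ζ`, the automorphism `σ : α ↦ ζ α` of `K(α)` acts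
diagonally on the basis `1, α, …, α^(p-1)` with the distinct eigenvalues `ζ^j`; an element `c`
with `c^p ∈ K` is an eigenvector, since `σ c / c` is a `p`-th root of unity, so `c = d α^i`.
In general one adjoins `ζ` first: `[K(ζ) : K] < p` is prime to `p`, so taking norms shows that an
element of `K` which is a `p`-th power in `K(ζ)` is already one in `K`. This keeps `a` a
non-`p`-th power over `K(ζ)` and brings `b / a^i = d^p` back down to `K`.
-/

open Polynomial AdjoinRoot IntermediateField

theorem Module.Basis.eq_repr_smul_of_apply_eq_smul {ι R M : Type*} [Fintype ι] [DecidableEq ι]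
    [CommRing R] [IsDomain R] [AddCommGroup M] [Module R M] (b : Basis ι R M)
    {f : M →ₗ[R] M} {μ : ι → R} (hμ : Function.Injective μ) (hf : ∀ j, f (b j) = μ j • b j)
    {v : M} {i : ι} (hv : f v = μ i • v) : v = b.repr v i • b i := by
  have hdiag : LinearMap.toMatrix b b f = Matrix.diagonal μ := by
    ext j k
    rcases eq_or_ne j k with rfl | hjk
    · simp [LinearMap.toMatrix_apply, hf]
    · simp [LinearMap.toMatrix_apply, hf, hjk]
  have hcoord (j : ι) : μ j * b.repr v j = μ i * b.repr v j := by
    have := congrFun (LinearMap.toMatrix_mulVec_repr b b f v) j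
    rwa [hdiag, Matrix.mulVec_diagonal, hv, map_smul, Finsupp.smul_apply, smul_eq_mul] at this
  refine b.repr.injective (Finsupp.ext fun j => ?_)
  rcases eq_or_ne j i with rfl | hji
  · simp
  · simpa [Finsupp.single_apply, hji.symm, hμ.ne hji] using hcoord j

theorem exists_pow_eq_of_pow_eq_pow_of_coprime {G₀ : Type*} [CommGroupWithZero G₀] {p m : ℕ}
    (hp : p ≠ 0) (hpm : p.Coprime m) {x y : G₀} (h : y ^ p = x ^ m) : ∃ d, d ^ p = x := by
  rcases eq_or_ne x 0 with rfl | hx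
  · exact ⟨0, zero_pow hp⟩
  refine ⟨x ^ Nat.gcdA p m * y ^ Nat.gcdB p m, ?_⟩
  have hbezout : (p : ℤ) * Nat.gcdA p m + m * Nat.gcdB p m = 1 := by
    rw [← Nat.gcd_eq_gcd_ab, hpm.gcd_eq_one, Nat.cast_one]
  rw [← zpow_natCast, mul_zpow, ← zpow_mul, ← zpow_mul, mul_comm (Nat.gcdB p m), zpow_mul y,
    zpow_natCast, h, ← zpow_natCast, ← zpow_mul, ← zpow_add₀ hx, mul_comm _ (p : ℤ), hbezout,
    zpow_one]

theorem exists_pow_eq_of_pow_eq_algebraMap {K L : Type*} [Field K] [Field L] [Algebra K L]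
    [FiniteDimensional K L] {p : ℕ} (hp : p ≠ 0) (hpL : p.Coprime (Module.finrank K L)) {x : K}
    {e : L} (he : e ^ p = algebraMap K L x) : ∃ d : K, d ^ p = x :=
  exists_pow_eq_of_pow_eq_pow_of_coprime hp hpL (y := Algebra.norm K e) <| by
    rw [← map_pow, he, Algebra.norm_algebraMap]

theorem AdjoinRoot.exists_eq_algebraMap_mul_root_pow {F : Type*} [Field F] {n : ℕ} {ζ : F}
    (hζ : IsPrimitiveRoot ζ n) {a : F} (H : Irreducible (X ^ n - C a))
    {c : AdjoinRoot (X ^ n - C a)} (hc : c ^ n ∈ Set.range (algebraMap F _)) :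
    ∃ i < n, ∃ d : F, c = algebraMap F _ d * root (X ^ n - C a) ^ i := by
  have : NeZero n := ⟨ne_zero_of_irreducible_X_pow_sub_C H⟩
  have : Fact (Irreducible (X ^ n - C a)) := ⟨H⟩
  let σ := autAdjoinRootXPowSubC n a hζ.toRootsOfUnity
  have hσ_root : σ (root _) = ζ • root _ := by
    rw [autAdjoinRootXPowSubC_root, hζ.val_toRootsOfUnity_coe]
  obtain ⟨i, hi, hσc⟩ : ∃ i < n, σ c = ζ ^ i • c := by
    obtain ⟨b, hb⟩ := hc
    have hσc : σ c ^ n = c ^ n := by rw [← map_pow, ← hb, AlgEquiv.commutes]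
    rw [← mem_nthRoots (NeZero.pos n),
      (hζ.map_of_injective (algebraMap F _).injective).nthRoots_eq rfl] at hσc
    obtain ⟨i, hi, hi_eq⟩ := Multiset.mem_map.mp hσc
    exact ⟨i, Multiset.mem_range.mp hi, by rw [← hi_eq, Algebra.smul_def, map_pow]⟩
  let pb := powerBasis' (monic_X_pow_sub_C a (NeZero.ne n))
  have hdim : pb.dim = n := by simp [pb]
  have hbasis (j : Fin pb.dim) : pb.basis j = root _ ^ (j : ℕ) := by
    simp [pb, PowerBasis.coe_basis]
  have hc_eq := pb.basis.eq_repr_smul_of_apply_eq_smul (f := σ.toLinearMap)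
    (μ := fun j => ζ ^ (j : ℕ)) (i := ⟨i, hi.trans_eq hdim.symm⟩)
    (fun j k hjk => Fin.ext (hζ.pow_inj (j.2.trans_eq hdim) (k.2.trans_eq hdim) hjk))
    (fun j => by simp [hbasis, hσ_root, _root_.smul_pow]) hσc
  exact ⟨i, hi, _, by rw [hc_eq, hbasis, Algebra.smul_def]⟩

theorem IsPrimitiveRoot.finrank_adjoin_le_totient {K L : Type*} [Field K] [Field L] [Algebra K L]
    {n : ℕ} [NeZero n] {ζ : L} (hζ : IsPrimitiveRoot ζ n) :
    Module.finrank K K⟮ζ⟯ ≤ n.totient := by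
  have hroot : aeval ζ (cyclotomic n K) = 0 := by
    rw [aeval_def, eval₂_eq_eval_map, map_cyclotomic]
    exact hζ.isRoot_cyclotomic (NeZero.pos n)
  rw [IntermediateField.adjoin.finrank ⟨_, cyclotomic.monic n K, hroot⟩, ← natDegree_cyclotomic n K]
  exact natDegree_le_of_dvd (minpoly.dvd K ζ hroot) (cyclotomic_ne_zero n K)

theorem exists_eq_algebraMap_mul_pow_of_mem_adjoin {F L : Type*} [Field F] [Field L]
    [Algebra F L] {n : ℕ} {ζ : F} (hζ : IsPrimitiveRoot ζ n) {a : F}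
    (H : Irreducible (X ^ n - C a)) {β : L} (hβ : β ^ n = algebraMap F L a) {c : L}
    (hc : c ∈ Algebra.adjoin F {β}) (hcn : c ^ n ∈ Set.range (algebraMap F L)) :
    ∃ i < n, ∃ d : F, c = algebraMap F L d * β ^ i := by
  have : Fact (Irreducible (X ^ n - C a)) := ⟨H⟩
  let ψ := liftAlgHom (X ^ n - C a) (Algebra.ofId F L) β (by simp [hβ])
  have hψ_root : ψ (root _) = β := liftAlgHom_root ..
  obtain ⟨t, rfl⟩ := (ψ.mem_range).mp <|
    Algebra.adjoin_le (Set.singleton_subset_iff.mpr (hψ_root ▸ ψ.mem_range_self _)) hc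
  obtain ⟨i, hi, d, rfl⟩ := exists_eq_algebraMap_mul_root_pow hζ H (c := t) <| by
    obtain ⟨b, hb⟩ := hcn
    have hψ_inj : Function.Injective ψ := ψ.toRingHom.injective
    exact ⟨b, hψ_inj (by rw [AlgHom.commutes, map_pow, hb])⟩
  exact ⟨i, hi, d, by rw [map_mul, map_pow, AlgHom.commutes, hψ_root]⟩

theorem exists_eq_pow_mul_pow_of_mem_adjoin {K L : Type*} [Field K] [Field L] [Algebra K L]
    {p : ℕ} (hp : p.Prime) {ζ : L} (hζ : IsPrimitiveRoot ζ p) {a : K} (ha : ∀ d : K, d ^ p ≠ a)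
    {β : L} (hβ : β ^ p = algebraMap K L a) {c : L} (hc : c ∈ Algebra.adjoin K {β}) {b : K}
    (hcb : c ^ p = algebraMap K L b) : ∃ i : ℕ, ∃ d : K, b = a ^ i * d ^ p := by
  have : NeZero p := ⟨hp.ne_zero⟩
  have : FiniteDimensional K K⟮ζ⟯ :=
    adjoin.finiteDimensional ((hζ.isIntegral hp.pos).tower_top (A := K))
  have hpF : p.Coprime (Module.finrank K K⟮ζ⟯) := Nat.coprime_of_lt_prime Module.finrank_pos.ne'
    (hζ.finrank_adjoin_le_totient.trans_lt (Nat.totient_lt p hp.one_lt)) hp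
  have hζF : IsPrimitiveRoot (⟨ζ, mem_adjoin_simple_self K ζ⟩ : K⟮ζ⟯) p :=
    IsPrimitiveRoot.coe_submonoidClass_iff.mp hζ
  have haF (e : K⟮ζ⟯) : e ^ p ≠ algebraMap K K⟮ζ⟯ a := fun he =>
    (exists_pow_eq_of_pow_eq_algebraMap hp.ne_zero hpF he).elim ha
  have hc' : c ∈ Algebra.adjoin K⟮ζ⟯ {β} :=
    Algebra.adjoin_le (S := (Algebra.adjoin K⟮ζ⟯ {β}).restrictScalars K)
      (Set.singleton_subset_iff.mpr (Algebra.self_mem_adjoin_singleton _ β)) hc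
  obtain ⟨i, -, d, hcd⟩ := exists_eq_algebraMap_mul_pow_of_mem_adjoin hζF
    (X_pow_sub_C_irreducible_of_prime hp haF) hβ hc' ⟨algebraMap K K⟮ζ⟯ b, hcb.symm⟩
  have ha0 : a ≠ 0 := by rintro rfl; exact ha 0 (zero_pow hp.ne_zero)
  have hd : d ^ p = algebraMap K K⟮ζ⟯ (b / a ^ i) := by
    have hai : algebraMap K L a ^ i ≠ 0 := pow_ne_zero i ((_root_.map_ne_zero _).mpr ha0)
    apply (algebraMap K⟮ζ⟯ L).injective
    rw [map_pow, ← IsScalarTower.algebraMap_apply, map_div₀, map_pow, eq_div_iff hai, ← hcb, hcd,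
      mul_pow, ← pow_mul, mul_comm i, pow_mul, hβ]
  obtain ⟨e, he⟩ := exists_pow_eq_of_pow_eq_algebraMap hp.ne_zero hpF hd
  exact ⟨i, e, by rw [he, mul_div_cancel₀ _ (pow_ne_zero i ha0)]⟩

theorem statement4_general (K : Type) [Field K] (p : ℕ) (hp : p.Prime) (hchar : ringChar K ≠ p)
    (a : K) (ha : ∀ c : K, c ^ p ≠ a)
    (E : Type) [Field E] [Algebra K E] (α : E)
    (hα : α ^ p = algebraMap K E a) (hgen : Algebra.adjoin K {α} = ⊤)
    (b : K) :
    (∃ c : E, c ^ p = algebraMap K E b) ↔ ∃ (i : ℤ) (d : K), b = a ^ i * d ^ p := by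
  constructor
  · rintro ⟨c, hc⟩
    have hα_int : IsIntegral K α :=
      ⟨X ^ p - C a, monic_X_pow_sub_C a hp.ne_zero, by simp [hα]⟩
    have : Algebra.IsIntegral K E :=
      ⟨fun x => adjoin_le_integralClosure hα_int (hgen ▸ Algebra.mem_top (x := x))⟩
    let φ : E →ₐ[K] AlgebraicClosure K := IsAlgClosed.lift
    have : NeZero (p : K) := NeZero.of_not_dvd K (p := ringChar K) fun h =>
      (hp.eq_one_or_self_of_dvd _ h).elim CharP.ringChar_ne_one hchar
    have : NeZero (p : AlgebraicClosure K) :=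
      NeZero.nat_of_injective (algebraMap K (AlgebraicClosure K)).injective
    obtain ⟨ζ, hζ⟩ := HasEnoughRootsOfUnity.exists_primitiveRoot (AlgebraicClosure K) p
    have hφc : φ c ∈ Algebra.adjoin K {φ α} := by
      rw [← AlgHom.map_adjoin_singleton, hgen]
      exact ⟨c, trivial, rfl⟩
    obtain ⟨i, d, rfl⟩ := exists_eq_pow_mul_pow_of_mem_adjoin hp hζ ha
      (by rw [← map_pow, hα, φ.commutes]) hφc (by rw [← map_pow, hc, φ.commutes])
    exact ⟨i, d, by rw [zpow_natCast]⟩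
  · rintro ⟨i, d, rfl⟩
    refine ⟨α ^ i * algebraMap K E d, ?_⟩
    rw [mul_pow, ← zpow_natCast (α ^ i), ← zpow_mul, mul_comm i, zpow_mul, zpow_natCast, hα,
      map_mul, map_zpow₀, map_pow]

/-- Let `K` be a field and `p` a prime with `p ≠ char K`. Let `a ∈ K*` be a
non-`p`-th power and let `E = K(a^{1/p})` be the field obtained by adjoining a `p`-th root `α`
of `a` (so `α ^ p = a` and `E` is generated over `K` by `α`). Then the kernel of the natural
homomorphism `K*/K*^p → E*/E*^p` is generated by the class of `a`: an element `b ∈ K*` becomes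
a `p`-th power in `E` if and only if `b = a^i * d^p` for some integer `i` and some `d ∈ K`. -/
theorem statement4 (K : Type) [Field K] (p : ℕ) (hp : p.Prime) (hchar : ringChar K ≠ p)
    (a : K) (ha0 : a ≠ 0) (ha : ∀ c : K, c ^ p ≠ a)
    (E : Type) [Field E] [Algebra K E] (α : E)
    (hα : α ^ p = algebraMap K E a) (hgen : Algebra.adjoin K {α} = ⊤)
    (b : K) (hb : b ≠ 0) :
    (∃ c : E, c ^ p = algebraMap K E b) ↔ ∃ (i : ℤ) (d : K), b = a ^ i * d ^ p :=
  statement4_general K p hp hchar a ha E α hα hgen b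
end

section
/- Let K be a field and p a prime with p ≠ char(K). Let L/K be a finite field extension of degree n = p^d · m with p not dividing m. Then the kernel of the natural homomorphism K*/K*^p → L*/L*^p has order at most p^d. -/
open Polynomial IntermediateField

namespace St6

open Polynomial IntermediateField


variable (p : ℕ)

def pr (F : Type*) [Field F] : Subgroup Fˣ := (powMonoidHom p : Fˣ →* Fˣ).range

def Φ (F E : Type*) [Field F] [Field E] [Algebra F E] :
    (Fˣ ⧸ pr p F) →* (Eˣ ⧸ pr p E) :=
  QuotientGroup.map _ _ (Units.map (algebraMap F E : F →* E))
    (by rintro x ⟨y, rfl⟩; exact ⟨Units.map (algebraMap F E : F →* E) y, (map_pow _ y p).symm⟩)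

variable {F E : Type*} [Field F] [Field E] [Algebra F E]

lemma mk_mem_ker_iff (x : Fˣ) :
    (QuotientGroup.mk x : Fˣ ⧸ pr p F) ∈ (Φ p F E).ker ↔
      ∃ u : Eˣ, u ^ p = Units.map (algebraMap F E : F →* E) x := by
  rw [MonoidHom.mem_ker, Φ, QuotientGroup.map_mk, QuotientGroup.eq_one_iff]
  exact ⟨fun ⟨u, hu⟩ => ⟨u, hu⟩, fun ⟨u, hu⟩ => ⟨u, hu⟩⟩

lemma mk_eq_one_iff (x : Fˣ) :
    (QuotientGroup.mk x : Fˣ ⧸ pr p F) = 1 ↔ ∃ c : Fˣ, c ^ p = x := by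
  rw [QuotientGroup.eq_one_iff]
  exact ⟨fun ⟨c, hc⟩ => ⟨c, hc⟩, fun ⟨c, hc⟩ => ⟨c, hc⟩⟩

lemma phi_comp_apply {M : Type*} [Field M] [Algebra F M] [Algebra M E] [IsScalarTower F M E]
    (q : Fˣ ⧸ pr p F) : Φ p M E (Φ p F M q) = Φ p F E q := by
  induction q using QuotientGroup.induction_on with
  | H x =>
    rw [Φ, Φ, Φ, QuotientGroup.map_mk, QuotientGroup.map_mk, QuotientGroup.map_mk]
    congr 1
    ext
    simp [IsScalarTower.algebraMap_apply F M E]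

variable {p : ℕ} {F E : Type*} [Field F] [Field E] [Algebra F E]

-- roots of unity of order p in a degree-p extension lie in the base field
lemma rou_mem (hp : p.Prime) (hcard : Module.finrank F E = p) {ζ : E} (h1 : ζ ^ p = 1) :
    ζ ∈ (algebraMap F E).range := by
  have hfd : FiniteDimensional F E := FiniteDimensional.of_finrank_pos (hcard ▸ hp.pos)
  have hint : IsIntegral F ζ := IsIntegral.of_finite F ζ
  have hdvd : (minpoly F ζ).natDegree ∣ p := by
    rw [← IntermediateField.adjoin.finrank hint, ← hcard]
    exact ⟨Module.finrank F⟮ζ⟯ E, (Module.finrank_mul_finrank F F⟮ζ⟯ E).symm⟩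
  rcases hp.eq_one_or_self_of_dvd _ hdvd with h | h
  · exact (minpoly.natDegree_eq_one_iff).mp h
  · exfalso
    have hdvd' : minpoly F ζ ∣ X ^ p - C 1 := minpoly.dvd F ζ (by simp [h1])
    have hmon : (X ^ p - C (1:F)).Monic := monic_X_pow_sub_C _ hp.ne_zero
    have heq : (X ^ p - C (1:F)) = minpoly F ζ :=
      Polynomial.eq_of_monic_of_dvd_of_natDegree_le (minpoly.monic hint) hmon hdvd'
        (by rw [natDegree_X_pow_sub_C, h])
    rw [← heq] at h
    have hroot : (X ^ p - C (1:F)).IsRoot 1 := by simp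
    have hirr : Irreducible (X ^ p - C (1:F)) := heq ▸ minpoly.irreducible hint
    have := Polynomial.degree_eq_one_of_irreducible_of_root hirr hroot
    rw [degree_X_pow_sub_C hp.pos] at this
    exact_mod_cast hp.one_lt.ne' (by exact_mod_cast this)

-- the minimal polynomial of a non-trivial p-th root
lemma minpoly_eq (hp : p.Prime) (hcard : Module.finrank F E = p)
    {w : E} {z : F} (hz : w ^ p = algebraMap F E z) (hw : w ∉ (algebraMap F E).range) :
    minpoly F w = X ^ p - C z := by
  have hfd : FiniteDimensional F E := FiniteDimensional.of_finrank_pos (hcard ▸ hp.pos)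
  have hzpow : ∀ c : F, c ^ p ≠ z := by
    intro c hc
    have hc0 : c ≠ 0 := by
      rintro rfl
      rw [zero_pow hp.ne_zero] at hc
      apply hw
      refine ⟨0, ?_⟩
      rw [map_zero]
      have hw0 : w ^ p = 0 := by rw [hz, ← hc, map_zero]
      exact ((pow_eq_zero_iff hp.ne_zero).mp hw0).symm
    have hζ : (w / algebraMap F E c) ^ p = 1 := by
      rw [div_pow, hz, ← map_pow, hc, div_self ((_root_.map_ne_zero _).mpr (hc ▸ pow_ne_zero p hc0))]

    obtain ⟨r, hr⟩ := rou_mem hp hcard hζ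
    apply hw
    refine ⟨r * c, ?_⟩
    rw [map_mul, hr, div_mul_cancel₀ _ ((_root_.map_ne_zero _).mpr hc0)]
  have hirr : Irreducible (X ^ p - C z) := X_pow_sub_C_irreducible_of_prime hp hzpow
  exact (minpoly.eq_of_irreducible_of_monic hirr (show (Polynomial.aeval w) (X ^ p - C z) = 0 by rw [map_sub, map_pow, aeval_X, aeval_C, hz, sub_self])
    (monic_X_pow_sub_C _ hp.ne_zero)).symm

-- such elements have trace zero
lemma trace_eq_zero (hp : p.Prime) (hcard : Module.finrank F E = p)
    {w : E} {z : F} (hz : w ^ p = algebraMap F E z) (hw : w ∉ (algebraMap F E).range) :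
    Algebra.trace F E w = 0 := by
  have hfd : FiniteDimensional F E := FiniteDimensional.of_finrank_pos (hcard ▸ hp.pos)
  have hmin := minpoly_eq hp hcard hz hw
  have hint : IsIntegral F w := IsIntegral.of_finite F w
  have htop : F⟮w⟯ = ⊤ := by
    rw [Field.primitive_element_iff_minpoly_natDegree_eq, hmin, natDegree_X_pow_sub_C, hcard]
  let e : F⟮w⟯ ≃ₐ[F] E := (IntermediateField.equivOfEq htop).trans IntermediateField.topEquiv
  let pb : PowerBasis F E := (IntermediateField.adjoin.powerBasis hint).map e
  have hgen : pb.gen = w := rfl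
  rw [← hgen, PowerBasis.trace_gen_eq_nextCoeff_minpoly, hgen, hmin]
  have h1 : (X ^ p - C z).natDegree = p := natDegree_X_pow_sub_C
  have hp2 : 2 ≤ p := hp.two_le
  rw [nextCoeff_of_natDegree_pos (by rw [h1]; exact hp.pos)]
  rw [h1, coeff_sub, coeff_X_pow, coeff_C, if_neg (by omega), if_neg (by omega)]
  simp

lemma mem_S_iff (u : Eˣ) :
    u ∈ (Units.map (algebraMap F E : F →* E)).range ↔ (u : E) ∈ (algebraMap F E).range := by
  constructor
  · rintro ⟨c, rfl⟩; exact ⟨c, rfl⟩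
  · rintro ⟨c, hc⟩
    have hc0 : c ≠ 0 := by
      rintro rfl; rw [map_zero] at hc; exact u.ne_zero hc.symm
    exact ⟨Units.mk0 c hc0, Units.ext (by simp [hc])⟩

lemma algebraMap_units_injective :
    Function.Injective (Units.map (algebraMap F E : F →* E)) :=
  Units.map_injective (algebraMap F E).injective

lemma pow_not_in_range (hp : p.Prime) {u : Eˣ} (hu : (u : E) ∉ (algebraMap F E).range)
    (hup : u ^ p ∈ (Units.map (algebraMap F E : F →* E)).range)
    {k : ℕ} (hk : ¬ p ∣ k) : ((u ^ k : Eˣ) : E) ∉ (algebraMap F E).range := by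
  intro hmem
  apply hu
  rw [← mem_S_iff] at hmem ⊢
  have hcop : Nat.gcd k p = 1 := (Nat.coprime_comm.mp (hp.coprime_iff_not_dvd.mpr hk)).gcd_eq_one
  have hbez := Nat.gcd_eq_gcd_ab k p
  rw [hcop] at hbez
  have : u = (u ^ (k : ℤ)) ^ Nat.gcdA k p * (u ^ (p : ℤ)) ^ Nat.gcdB k p := by
    rw [← zpow_mul, ← zpow_mul, ← zpow_add, ← hbez]
    norm_num
  rw [this]
  exact mul_mem (Subgroup.zpow_mem _ (by rw [zpow_natCast]; exact hmem) _)
    (Subgroup.zpow_mem _ (by rw [zpow_natCast]; exact hup) _)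

lemma trace_argument (hp : p.Prime) (hpF : (p : F) ≠ 0) (hcard : Module.finrank F E = p)
    {x1 : Fˣ} (hx1 : ∀ c : Fˣ, c ^ p ≠ x1) {u1 : Eˣ}
    (hu1 : u1 ^ p = Units.map (algebraMap F E : F →* E) x1)
    {x2 : Fˣ} {u2 : Eˣ} (hu2 : u2 ^ p = Units.map (algebraMap F E : F →* E) x2) :
    ∃ (j : ℤ) (c : Fˣ), x2 = c ^ p * x1 ^ j := by
  have hfd : FiniteDimensional F E := FiniteDimensional.of_finrank_pos (hcard ▸ hp.pos)
  -- u1 is not in the image of F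
  have hu1r : (u1 : E) ∉ (algebraMap F E).range := by
    intro hmem
    rw [← mem_S_iff] at hmem
    obtain ⟨c, hc⟩ := hmem
    apply hx1 c
    apply algebraMap_units_injective (E := E)
    rw [← hu1, ← hc, map_pow]
  -- the coercion of hu1
  have hW1 : (u1 : E) ^ p = algebraMap F E ((x1 : Fˣ) : F) := by
    have := congrArg (Units.val) hu1
    simpa using this
  by_contra hcon
  push_neg at hcon
  -- for every integer j, u2 * u1 ^ j is not in the image of F
  have hnot : ∀ j : ℤ, ((u2 * u1 ^ j : Eˣ) : E) ∉ (algebraMap F E).range := by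
    intro j hmem
    rw [← mem_S_iff] at hmem
    obtain ⟨c, hc⟩ := hmem
    apply hcon (-j) c
    apply algebraMap_units_injective (E := E)
    have hcalc : u2 = Units.map (algebraMap F E : F →* E) c * u1 ^ (-j) := by
      rw [hc]; group
    have hjp : (u1 ^ (-j)) ^ p = (u1 ^ p) ^ (-j) := by
      rw [← zpow_natCast (u1 ^ (-j)) p, ← zpow_mul, ← zpow_natCast u1 p, ← zpow_mul, mul_comm]
    calc Units.map (algebraMap F E : F →* E) x2 = u2 ^ p := hu2.symm
      _ = (Units.map (algebraMap F E : F →* E) c) ^ p * (u1 ^ p) ^ (-j) := by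
          rw [hcalc, mul_pow, hjp]
      _ = Units.map (algebraMap F E : F →* E) (c ^ p * x1 ^ (-j)) := by
          rw [hu1, map_mul, map_pow, map_zpow]
  -- the power basis generated by u1
  have hmin : minpoly F ((u1 : E)) = X ^ p - C ((x1 : Fˣ) : F) := minpoly_eq hp hcard hW1 hu1r
  have hint : IsIntegral F ((u1 : E)) := IsIntegral.of_finite F _
  have htop : F⟮((u1 : E))⟯ = ⊤ := by
    rw [Field.primitive_element_iff_minpoly_natDegree_eq, hmin, natDegree_X_pow_sub_C, hcard]
  let e : F⟮((u1 : E))⟯ ≃ₐ[F] E := (IntermediateField.equivOfEq htop).trans IntermediateField.topEquiv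
  let pb : PowerBasis F E := (IntermediateField.adjoin.powerBasis hint).map e
  have hgen : pb.gen = (u1 : E) := rfl
  have hpd : pb.dim = p := by rw [← pb.finrank, hcard]
  -- traces of powers of u1
  have tr_pow : ∀ k : ℕ, ¬ p ∣ k → Algebra.trace F E ((u1 : E) ^ k) = 0 := by
    intro k hk
    have h1 : ((u1 : E) ^ k) ^ p = algebraMap F E (((x1 ^ k : Fˣ) : F)) := by
      rw [← pow_mul, mul_comm k p, pow_mul, hW1, ← map_pow]
      simp
    have h2 : ((u1 : E) ^ k) ∉ (algebraMap F E).range := by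
      have := pow_not_in_range hp hu1r ⟨x1, hu1.symm⟩ hk
      simpa using this
    exact trace_eq_zero hp hcard h1 h2
  have tr_p : Algebra.trace F E ((u1 : E) ^ p) = (p : F) * ((x1 : Fˣ) : F) := by
    rw [hW1, Algebra.trace_algebraMap, hcard, nsmul_eq_mul]
  -- the coordinates of u2 in the power basis
  set c : Fin pb.dim →₀ F := pb.basis.repr ((u2 : E)) with hcdef
  have hrepr : (∑ i : Fin pb.dim, c i • (u1 : E) ^ (i : ℕ)) = (u2 : E) := by
    conv_rhs => rw [← pb.basis.sum_repr ((u2 : E))]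
    exact Finset.sum_congr rfl fun i _ => by rw [pb.basis_eq_pow, hgen]
  have hczero : ∀ j : Fin pb.dim, c j = 0 := by
    intro j
    have hjlt : (j : ℕ) < p := hpd ▸ j.isLt
    -- the trace of u2 * u1 ^ (p - j) vanishes
    have hv : Algebra.trace F E ((u2 : E) * (u1 : E) ^ (p - (j : ℕ))) = 0 := by
      have h1 : ((u2 : E) * (u1 : E) ^ (p - (j : ℕ))) ^ p
          = algebraMap F E (((x2 * x1 ^ (p - (j : ℕ)) : Fˣ) : F)) := by
        rw [mul_pow, ← pow_mul, mul_comm (p - (j:ℕ)) p, pow_mul, hW1, ← map_pow]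
        have h2 : (u2 : E) ^ p = algebraMap F E ((x2 : Fˣ) : F) := by
          have := congrArg (Units.val) hu2
          simpa using this
        rw [h2, ← map_mul]
        simp
      have h2 : ((u2 : E) * (u1 : E) ^ (p - (j : ℕ))) ∉ (algebraMap F E).range := by
        have := hnot ((p - (j : ℕ) : ℕ) : ℤ)
        simpa [zpow_natCast] using this
      exact trace_eq_zero hp hcard h1 h2
    have hexp : Algebra.trace F E ((u2 : E) * (u1 : E) ^ (p - (j : ℕ)))
        = ∑ i : Fin pb.dim, c i * Algebra.trace F E ((u1 : E) ^ ((i : ℕ) + (p - (j : ℕ)))) := by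
      conv_lhs => rw [← hrepr, Finset.sum_mul, map_sum]
      exact Finset.sum_congr rfl fun i _ => by
        rw [smul_mul_assoc, LinearMap.map_smul, ← pow_add, smul_eq_mul]
    have hsingle : ∑ i : Fin pb.dim, c i * Algebra.trace F E ((u1 : E) ^ ((i : ℕ) + (p - (j : ℕ))))
        = c j * ((p : F) * ((x1 : Fˣ) : F)) := by
      rw [Finset.sum_eq_single j]
      · congr 1
        have : (j : ℕ) + (p - (j : ℕ)) = p := by omega
        rw [this, tr_p]
      · intro i _ hij
        have hilt : (i : ℕ) < p := hpd ▸ i.isLt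
        have hine : (i : ℕ) ≠ (j : ℕ) := fun h => hij (Fin.ext h)
        have hnd : ¬ p ∣ ((i : ℕ) + (p - (j : ℕ))) := by
          rintro ⟨t, ht⟩
          have ht2 : t < 2 := by
            by_contra hcon2
            push_neg at hcon2
            have := Nat.mul_le_mul_left p hcon2
            omega
          interval_cases t <;> omega
        rw [tr_pow _ hnd, mul_zero]
      · intro h
        exact absurd (Finset.mem_univ j) h
    rw [hexp, hsingle] at hv
    rcases mul_eq_zero.mp hv with h | h
    · exact h
    · exact absurd h (mul_ne_zero hpF x1.ne_zero)
  have : (u2 : E) = 0 := by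
    rw [← hrepr]
    simp [hczero]
  exact u2.ne_zero this

lemma kerA (hp : p.Prime) (hpF : (p : F) ≠ 0) (hcard : Module.finrank F E = p) :
    Finite (Φ p F E).ker ∧ Nat.card (Φ p F E).ker ≤ p := by
  by_cases hbot : (Φ p F E).ker = ⊥
  · rw [hbot]
    exact ⟨inferInstance, by rw [Subgroup.card_bot]; exact hp.one_lt.le⟩
  · have h1 := mt (Subgroup.eq_bot_iff_forall _).mpr hbot
    push_neg at h1
    obtain ⟨q, hq, hq1⟩ := h1
    obtain ⟨x1, rfl⟩ := QuotientGroup.mk_surjective q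
    have hx1 : ∀ c : Fˣ, c ^ p ≠ x1 := by
      intro c hc
      exact hq1 ((mk_eq_one_iff p x1).mpr ⟨c, hc⟩)
    obtain ⟨u1, hu1⟩ := (mk_mem_ker_iff p x1).mp hq
    have hle : (Φ p F E).ker ≤ Subgroup.zpowers (QuotientGroup.mk x1 : Fˣ ⧸ pr p F) := by
      intro q' hq'
      obtain ⟨x2, rfl⟩ := QuotientGroup.mk_surjective q'
      obtain ⟨u2, hu2⟩ := (mk_mem_ker_iff p x2).mp hq'
      obtain ⟨j, c, hjc⟩ := trace_argument hp hpF hcard hx1 hu1 hu2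
      refine ⟨j, ?_⟩
      show (QuotientGroup.mk x1 : Fˣ ⧸ pr p F) ^ j = QuotientGroup.mk x2
      have h1 : (QuotientGroup.mk (c ^ p) : Fˣ ⧸ pr p F) = 1 := (mk_eq_one_iff p _).mpr ⟨c, rfl⟩
      rw [← QuotientGroup.mk_zpow, hjc, QuotientGroup.mk_mul, h1]
      exact (one_mul (QuotientGroup.mk (x1 ^ j) : Fˣ ⧸ pr p F)).symm
    have hpow : (QuotientGroup.mk x1 : Fˣ ⧸ pr p F) ^ p = 1 := by
      rw [← QuotientGroup.mk_pow]
      exact (mk_eq_one_iff p _).mpr ⟨x1, rfl⟩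
    have hfo : IsOfFinOrder (QuotientGroup.mk x1 : Fˣ ⧸ pr p F) :=
      isOfFinOrder_iff_pow_eq_one.mpr ⟨p, hp.pos, hpow⟩
    have hfin : Finite (Subgroup.zpowers (QuotientGroup.mk x1 : Fˣ ⧸ pr p F)) :=
      hfo.finite_zpowers
    have hord : orderOf (QuotientGroup.mk x1 : Fˣ ⧸ pr p F) ≤ p :=
      Nat.le_of_dvd hp.pos (orderOf_dvd_of_pow_eq_one hpow)
    refine ⟨Finite.of_injective _ (Subgroup.inclusion_injective hle), ?_⟩
    calc Nat.card (Φ p F E).ker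
        ≤ Nat.card (Subgroup.zpowers (QuotientGroup.mk x1 : Fˣ ⧸ pr p F)) :=
          Nat.card_le_card_of_injective _ (Subgroup.inclusion_injective hle)
      _ = orderOf (QuotientGroup.mk x1 : Fˣ ⧸ pr p F) := Nat.card_zpowers _
      _ ≤ p := hord

lemma kerB (p : ℕ) (hp : p.Prime) :
    ∀ n : ℕ, ∀ (F E : Type) (_ : Field F) (_ : Field E) (_ : Algebra F E)
      (_ : FiniteDimensional F E), (p : F) ≠ 0 → ∀ d m : ℕ, ¬ p ∣ m →
      Module.finrank F E = p ^ d * m → Module.finrank F E = n →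
      Finite (Φ p F E).ker ∧ Nat.card (Φ p F E).ker ≤ p ^ d := by
  intro n
  induction n using Nat.strong_induction_on with
  | _ n IH =>
    intro F E _ _ _ _ hpF d m hm hdeg hn
    by_cases hbot : (Φ p F E).ker = ⊥
    · constructor
      · rw [hbot]; infer_instance
      · rw [hbot, Subgroup.card_bot]
        exact Nat.one_le_iff_ne_zero.mpr (pow_ne_zero d hp.ne_zero)
    have h1 := mt (Subgroup.eq_bot_iff_forall _).mpr hbot
    push_neg at h1
    obtain ⟨q, hq, hq1⟩ := h1
    obtain ⟨x1, rfl⟩ := QuotientGroup.mk_surjective q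
    have hx1 : ∀ c : Fˣ, c ^ p ≠ x1 := by
      intro c hc
      exact hq1 ((mk_eq_one_iff p x1).mpr ⟨c, hc⟩)
    obtain ⟨u1, hu1⟩ := (mk_mem_ker_iff p x1).mp hq
    have hW1 : ((u1 : Eˣ) : E) ^ p = algebraMap F E ((x1 : Fˣ) : F) := by
      have := congrArg (Units.val) hu1
      simpa using this
    have hzpow : ∀ b : F, b ^ p ≠ ((x1 : Fˣ) : F) := by
      intro b hb
      have hb0 : b ≠ 0 := by
        rintro rfl
        rw [zero_pow hp.ne_zero] at hb
        exact x1.ne_zero hb.symm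
      exact hx1 (Units.mk0 b hb0) (Units.ext (by simp [hb]))
    have hirr : Irreducible (X ^ p - C ((x1 : Fˣ) : F)) :=
      X_pow_sub_C_irreducible_of_prime hp hzpow
    have hminW : minpoly F ((u1 : Eˣ) : E) = X ^ p - C ((x1 : Fˣ) : F) :=
      (minpoly.eq_of_irreducible_of_monic hirr
        (show (Polynomial.aeval ((u1 : Eˣ) : E)) (X ^ p - C ((x1 : Fˣ) : F)) = 0 by
          rw [map_sub, map_pow, aeval_X, aeval_C, hW1, sub_self])
        (monic_X_pow_sub_C _ hp.ne_zero)).symm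
    set M : IntermediateField F E := F⟮((u1 : Eˣ) : E)⟯ with hM
    have hMfr : Module.finrank F M = p := by
      rw [hM, IntermediateField.adjoin.finrank (IsIntegral.of_finite F _), hminW,
        natDegree_X_pow_sub_C]
    haveI : FiniteDimensional (↥M) E := FiniteDimensional.right F (↥M) E
    have hpM : (p : ↥M) ≠ 0 := by
      intro h
      apply hpF
      apply (algebraMap F ↥M).injective
      rw [map_natCast, h, map_zero]
    have htower : Module.finrank F ↥M * Module.finrank ↥M E = Module.finrank F E :=
      Module.finrank_mul_finrank F ↥M E
    have hd : d ≠ 0 := by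
      rintro rfl
      rw [pow_zero, one_mul] at hdeg
      apply hm
      refine ⟨Module.finrank ↥M E, ?_⟩
      rw [← hdeg, ← htower, hMfr]
    have hME : Module.finrank ↥M E = p ^ (d - 1) * m := by
      have h2 : p * Module.finrank ↥M E = p * (p ^ (d - 1) * m) := by
        conv_lhs => rw [← hMfr, htower, hdeg]
        rw [← mul_assoc, ← pow_succ', Nat.sub_add_cancel (Nat.one_le_iff_ne_zero.mpr hd)]
      exact Nat.eq_of_mul_eq_mul_left hp.pos h2
    have hfrpos : 0 < Module.finrank ↥M E := Module.finrank_pos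
    have hlt : Module.finrank ↥M E < n := by
      have h3 : n = p * Module.finrank ↥M E := by
        rw [← hn, ← htower, hMfr]
      have h4 : 2 ≤ p := hp.two_le
      nlinarith
    obtain ⟨hfinME, hcardME⟩ := IH _ hlt (↥M) E inferInstance inferInstance inferInstance inferInstance hpM (d - 1) m hm hME rfl
    obtain ⟨hfinFM, hcardFM⟩ := kerA hp hpF hMfr
    -- combine via the restriction homomorphism
    set ψ : (Φ p F E).ker →* (Mˣ ⧸ pr p ↥M) := (Φ p F ↥M).comp (Φ p F E).ker.subtype with hψ
    haveI := hfinFM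
    haveI := hfinME
    let g : ψ.ker → (Φ p F ↥M).ker := fun t => ⟨((t : (Φ p F E).ker) : Fˣ ⧸ pr p F), t.2⟩
    have hginj : Function.Injective g := by
      intro t1 t2 h
      exact Subtype.ext (Subtype.ext (congrArg (fun z : (Φ p F ↥M).ker => z.1) h))
    have hrange : ∀ s ∈ ψ.range, s ∈ (Φ p ↥M E).ker := by
      rintro s ⟨t, rfl⟩
      rw [MonoidHom.mem_ker]
      show Φ p ↥M E (Φ p F ↥M ((t : (Φ p F E).ker) : Fˣ ⧸ pr p F)) = 1
      rw [phi_comp_apply]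
      exact t.2
    let g2 : ψ.range → (Φ p ↥M E).ker := fun s => ⟨s.1, hrange s.1 s.2⟩
    have hg2inj : Function.Injective g2 := by
      intro t1 t2 h
      exact Subtype.ext (congrArg (fun z : (Φ p ↥M E).ker => z.1) h)
    haveI hfk : Finite ψ.ker := Finite.of_injective g hginj
    haveI hfr : Finite ψ.range := Finite.of_injective g2 hg2inj
    haveI hfq : Finite ((Φ p F E).ker ⧸ ψ.ker) :=
      Finite.of_equiv _ (QuotientGroup.quotientKerEquivRange ψ).toEquiv.symm
    haveI hfG : Finite (Φ p F E).ker :=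
      Finite.of_equiv _ (Subgroup.groupEquivQuotientProdSubgroup (s := ψ.ker)).symm
    refine ⟨hfG, ?_⟩
    have hcardeq : Nat.card (Φ p F E).ker
        = Nat.card ((Φ p F E).ker ⧸ ψ.ker) * Nat.card ψ.ker :=
      Subgroup.card_eq_card_quotient_mul_card_subgroup ψ.ker
    have hq1' : Nat.card ((Φ p F E).ker ⧸ ψ.ker) = Nat.card ψ.range :=
      Nat.card_congr (QuotientGroup.quotientKerEquivRange ψ).toEquiv
    have hb1 : Nat.card ψ.ker ≤ p := le_trans (Nat.card_le_card_of_injective g hginj) hcardFM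
    have hb2 : Nat.card ψ.range ≤ p ^ (d - 1) :=
      le_trans (Nat.card_le_card_of_injective g2 hg2inj) hcardME
    calc Nat.card (Φ p F E).ker
        = Nat.card ψ.range * Nat.card ψ.ker := by rw [hcardeq, hq1']
      _ ≤ p ^ (d - 1) * p := Nat.mul_le_mul hb2 hb1
      _ = p ^ d := by rw [← pow_succ]; congr 1; omega

end St6

/-- Let `K` be a field and `p` a prime with `p ≠ char K`. If `L/K` is a finite
field extension of degree `n = p ^ d * m` with `p ∤ m`, then the kernel of the natural
homomorphism `K*/K*^p → L*/L*^p` has order at most `p ^ d`. -/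
theorem statement6 (K L : Type) [Field K] [Field L] [Algebra K L] [FiniteDimensional K L]
    (p : ℕ) (hp : p.Prime) (hchar : ringChar K ≠ p)
    (d m : ℕ) (hm : ¬ p ∣ m) (hdeg : Module.finrank K L = p ^ d * m) :
    Nat.card (MonoidHom.ker (QuotientGroup.map
      ((powMonoidHom p : Kˣ →* Kˣ).range) ((powMonoidHom p : Lˣ →* Lˣ).range)
      (Units.map (algebraMap K L : K →* L))
      (by
        rintro x ⟨y, rfl⟩
        exact ⟨Units.map (algebraMap K L : K →* L) y, (map_pow _ y p).symm⟩))) ≤ p ^ d := by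
  have hpK : (p : K) ≠ 0 := fun h => hchar (CharP.ringChar_of_prime_eq_zero hp h)
  exact (St6.kerB p hp (Module.finrank K L) K L inferInstance inferInstance inferInstance inferInstance hpK d m hm hdeg rfl).2
end

section
/- Let k be a p-adic field and let E/k be a finite field extension such that every field extension of k of degree p admits a k-embedding into E. Let D be a central division algebra of degree p over E. Then for every field extension N/k of degree p, the algebra D ⊗_E (N ⊗_k E) is not split; that is, there is at least one field factor of the étale E-algebra N ⊗_k E over which the base change of D remains a division algebra. (This expresses that the corresponding torsor under R_{E/k}(PGL_p) has no closed point of degree p.) -/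
open scoped TensorProduct
open Module

set_option synthInstance.maxHeartbeats 400000
set_option maxHeartbeats 800000

/-- The central simple algebra `D` of degree `p` over `E` is split over `N ⊗_k E`, i.e. its
base change to every field factor `F` of the étale `E`-algebra `N ⊗_k E` is a matrix algebra;
field factors are encoded as fields `F` receiving `N` and `E` compatibly over `k` with the
induced map `N ⊗[k] E → F` surjective. -/
def CSASplitsOver (k E : Type) [Field k] [Field E] [Algebra k E]
    (D : Type) [Ring D] [Algebra E D] (p : ℕ)
    (N : Type) [Field N] [Algebra k N] : Prop :=
  ∀ (F : Type) [Field F] [Algebra k F] [Algebra N F] [Algebra E F]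
    [IsScalarTower k N F] [IsScalarTower k E F],
    Function.Surjective (Algebra.TensorProduct.productMap
      (IsScalarTower.toAlgHom k N F) (IsScalarTower.toAlgHom k E F)) →
    Nonempty ((F ⊗[E] D) ≃ₐ[F] Matrix (Fin p) (Fin p) F)

/-!
Since `N` has degree `p` over `k`, it embeds into `E`, and then `E` itself is a field factor of
`N ⊗_k E`. Splitting over that factor would make `D` a matrix algebra `M_p(E)`, which for `p ≥ 2`
has nonzero nilpotents, impossible in a division algebra.
-/

theorem Matrix.exists_ne_zero_mul_self_eq_zero {n R : Type*} [Fintype n] [DecidableEq n]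
    [Nontrivial n] [Semiring R] [Nontrivial R] :
    ∃ A : Matrix n n R, A ≠ 0 ∧ A * A = 0 := by
  obtain ⟨i, j, hij⟩ := exists_pair_ne n
  refine ⟨single i j 1, fun h => ?_, single_mul_single_of_ne (c := 1) i j i hij.symm 1⟩
  simpa using congrFun (congrFun h i) j

theorem isEmpty_ringEquiv_matrix_of_noZeroDivisors (D : Type*) {n R : Type*} [Ring D]
    [NoZeroDivisors D] [Fintype n] [DecidableEq n] [Nontrivial n] [Semiring R] [Nontrivial R] :
    IsEmpty (D ≃+* Matrix n n R) := by
  refine ⟨fun e => ?_⟩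
  obtain ⟨A, hA, hAA⟩ := Matrix.exists_ne_zero_mul_self_eq_zero (n := n) (R := R)
  have : e.symm A * e.symm A = 0 := by rw [← map_mul, hAA, map_zero]
  exact hA (e.symm.map_eq_zero_iff.mp (mul_self_eq_zero.mp this))

theorem Algebra.TensorProduct.productMap_toAlgHom_surjective (k N E : Type*) [CommRing k]
    [CommRing N] [CommRing E] [Algebra k N] [Algebra k E] [Algebra N E] [IsScalarTower k N E] :
    Function.Surjective
      (productMap (IsScalarTower.toAlgHom k N E) (IsScalarTower.toAlgHom k E E)) :=
  fun x => ⟨1 ⊗ₜ x, by simp⟩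

theorem CSASplitsOver.nonempty_algEquiv_matrix {k E D N : Type} [Field k] [Field E]
    [Algebra k E] [Ring D] [Algebra E D] [Field N] [Algebra k N] {p : ℕ}
    (h : CSASplitsOver k E D p N) (σ : N →ₐ[k] E) :
    Nonempty (D ≃ₐ[E] Matrix (Fin p) (Fin p) E) := by
  let _ : Algebra N E := σ.toRingHom.toAlgebra
  have : IsScalarTower k N E := .of_algebraMap_eq fun x => (σ.commutes x).symm
  obtain ⟨e⟩ := h E (Algebra.TensorProduct.productMap_toAlgHom_surjective k N E)
  exact ⟨(Algebra.TensorProduct.lid E D).symm.trans e⟩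

theorem statement9_general (p : ℕ) [Fact p.Prime] (k : Type) [Field k]
    (E : Type) [Field E] [Algebra k E]
    (hE : ∀ (F : Type) [Field F] [Algebra k F], FiniteDimensional k F →
      finrank k F = p → Nonempty (F →ₐ[k] E))
    (D : Type) [DivisionRing D] [Algebra E D]
    (N : Type) [Field N] [Algebra k N] [FiniteDimensional k N]
    (hN : finrank k N = p) :
    ¬ CSASplitsOver k E D p N := by
  intro h
  obtain ⟨σ⟩ := hE N inferInstance hN
  obtain ⟨e⟩ := h.nonempty_algEquiv_matrix σ
  have : Nontrivial (Fin p) := Fin.nontrivial_iff_two_le.mpr (Fact.out : p.Prime).two_le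
  exact (isEmpty_ringEquiv_matrix_of_noZeroDivisors D).false e.toRingEquiv

/-- Let `k` be a `p`-adic field and `E/k` a finite extension into which every
degree-`p` extension of `k` embeds over `k`. Let `D` be a central division algebra of degree
`p` over `E` (so `dim_E D = p²`). Then for every field extension `N/k` of degree `p`, the
algebra `D ⊗_E (N ⊗_k E)` is not split, i.e. it is not the case that the base change of `D`
to every field factor of `N ⊗_k E` is a matrix algebra. (So the corresponding
`R_{E/k}(PGL_p)`-torsor has no closed point of degree `p`.) -/
theorem statement9 (p : ℕ) [Fact p.Prime] (k : Type) [Field k]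
    [Algebra ℚ_[p] k] [FiniteDimensional ℚ_[p] k]
    (E : Type) [Field E] [Algebra k E] [FiniteDimensional k E]
    (hE : ∀ (F : Type) [Field F] [Algebra k F], FiniteDimensional k F →
      finrank k F = p → Nonempty (F →ₐ[k] E))
    (D : Type) [DivisionRing D] [Algebra E D] [Algebra.IsCentral E D]
    (hD : finrank E D = p ^ 2)
    (N : Type) [Field N] [Algebra k N] [FiniteDimensional k N]
    (hN : finrank k N = p) :
    ¬ CSASplitsOver k E D p N :=
  statement9_general p k E hE D N hN
end
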